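/- arXiv:1911.10474 — 5 statements merged into one kernel-verified Lean document; each statement's English description precedes it below -/
import Mathlib

section
/- For every integer n ≥ 3, setting L = 4·cos²(π/n), the cubic equation 2K³ − 3K² + 1 − L·(K+1)² = 0 has exactly one real solution K with K > 1. -/
open Real

private lemma cos_pos_of_n (n : ℕ) (hn : 3 ≤ n) : 0 < Real.cos (π / n) := by
  apply Real.cos_pos_of_mem_Ioo
  constructor
  · have : (0:ℝ) < π / n := by
      apply div_pos Real.pi_pos
      exact_mod_cast Nat.lt_of_lt_of_le (by norm_num) hn
    linarith [Real.pi_pos]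
  · have hn' : (3:ℝ) ≤ n := by exact_mod_cast hn
    have : π / n ≤ π / 3 := by
      apply div_le_div_of_nonneg_left Real.pi_pos.le (by norm_num) hn'
    linarith [Real.pi_pos]

/-- For every integer `n ≥ 3`, setting `L = 4 cos²(π/n)`, the cubic equation
`2K³ − 3K² + 1 − L(K+1)² = 0` has exactly one real solution `K` with `K > 1`. -/
theorem unique_root_gt_one (n : ℕ) (hn : 3 ≤ n) :
    ∃! K : ℝ, K > 1 ∧
      2 * K ^ 3 - 3 * K ^ 2 + 1 - (4 * Real.cos (π / n) ^ 2) * (K + 1) ^ 2 = 0 := by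
  set L : ℝ := 4 * Real.cos (π / n) ^ 2 with hLdef
  have hL : 0 < L := by
    have := cos_pos_of_n n hn
    positivity
  set f : ℝ → ℝ := fun K => 2 * K ^ 3 - 3 * K ^ 2 + 1 - L * (K + 1) ^ 2 with hf
  have hcont : ContinuousOn f (Set.Icc 1 (L + 2)) := by
    apply Continuous.continuousOn; fun_prop
  have h1 : f 1 < 0 := by simp only [hf]; nlinarith
  have h2 : 0 < f (L + 2) := by
    simp only [hf]
    nlinarith [pow_pos hL 3, pow_pos hL 2, hL]
  have hle : (1:ℝ) ≤ L + 2 := by linarith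
  obtain ⟨K, hKmem, hK0⟩ := intermediate_value_Icc hle hcont
    (Set.mem_Icc.mpr ⟨h1.le, h2.le⟩)
  have hKgt : K > 1 := by
    rcases lt_or_eq_of_le hKmem.1 with h | h
    · exact h
    · exfalso; rw [← h] at hK0; rw [hK0] at h1; exact lt_irrefl 0 h1
  -- key uniqueness lemma
  have keylt : ∀ a b : ℝ, a > 1 → b > 1 → a < b → f a = 0 → f b = 0 → False := by
    intro a b ha hb hab hfa hfb
    have e1 : (a - 1) ^ 2 * (2 * a + 1) = L * (a + 1) ^ 2 := by
      simp only [hf] at hfa; nlinarith [hfa]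
    have e2 : (b - 1) ^ 2 * (2 * b + 1) = L * (b + 1) ^ 2 := by
      simp only [hf] at hfb; nlinarith [hfb]
    have hcross : (a - 1) ^ 2 * (2 * a + 1) * (b + 1) ^ 2
        = (b - 1) ^ 2 * (2 * b + 1) * (a + 1) ^ 2 := by
      rw [e1, e2]; ring
    have hx : (0:ℝ) < a - 1 := by linarith
    have hy : (0:ℝ) < b - 1 := by linarith
    have hS : (0:ℝ) < 8*(b-1)^2 + 8*(a-1)*(b-1)^2 + 2*(a-1)^2*(b-1)^2
        + 12*(b-1) + 20*(a-1)*(b-1) + 8*(a-1)^2*(b-1) + 8*(a-1)^2 + 12*(a-1) := by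
      positivity
    have hD : (b - a) * (8*(b-1)^2 + 8*(a-1)*(b-1)^2 + 2*(a-1)^2*(b-1)^2
        + 12*(b-1) + 20*(a-1)*(b-1) + 8*(a-1)^2*(b-1) + 8*(a-1)^2 + 12*(a-1)) = 0 := by
      linear_combination -hcross
    have := mul_pos (show (0:ℝ) < b - a by linarith) hS
    linarith
  have key : ∀ a b : ℝ, a > 1 → b > 1 → f a = 0 → f b = 0 → a = b := by
    intro a b ha hb hfa hfb
    by_contra hne
    rcases lt_or_gt_of_ne hne with h | h
    · exact keylt a b ha hb h hfa hfb
    · exact keylt b a hb ha h hfb hfa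
  refine ⟨K, ⟨hKgt, hK0⟩, ?_⟩
  intro y ⟨hy1, hy0⟩
  exact key y K hy1 hKgt hy0 hK0
end

section
/- Let n ≥ 3 be an integer and let c > 0, s > 0 be real numbers satisfying sinh(s/2)·sinh(c/2) = cos(π/n). Set K = cosh c. If 2K²/(K+1) = (K + (sinh²(c)·cosh(s) − cosh²(c)))/(K − 1), then 2K³ − 3K² + 1 − 4·cos²(π/n)·(K+1)² = 0. -/
open Real

/-- Let `n ≥ 3`, `c > 0`, `s > 0` with `sinh(s/2)·sinh(c/2) = cos(π/n)`, and set
`K = cosh c`. If `2K²/(K+1) = (K + (sinh²c·cosh s − cosh²c))/(K − 1)`, then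
`2K³ − 3K² + 1 − 4cos²(π/n)·(K+1)² = 0`. -/
theorem cubic_of_equal_length (n : ℕ) (hn : 3 ≤ n) (c s : ℝ) (hc : c > 0) (hs : s > 0)
    (hrel : Real.sinh (s / 2) * Real.sinh (c / 2) = Real.cos (π / n))
    (K : ℝ) (hK : K = Real.cosh c)
    (heq : 2 * K ^ 2 / (K + 1) =
      (K + (Real.sinh c ^ 2 * Real.cosh s - Real.cosh c ^ 2)) / (K - 1)) :
    2 * K ^ 3 - 3 * K ^ 2 + 1 - 4 * Real.cos (π / n) ^ 2 * (K + 1) ^ 2 = 0 := by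
  set A := Real.sinh (c / 2) with hA
  set B := Real.cosh (c / 2) with hB
  set S := Real.sinh (s / 2) with hS
  have hApos : 0 < A := Real.sinh_pos_iff.2 (by linarith)
  have hB2 : B ^ 2 = A ^ 2 + 1 := by
    rw [hA, hB]; rw [Real.cosh_sq]
  have hcoshc : Real.cosh c = 2 * A ^ 2 + 1 := by
    have : c = 2 * (c / 2) := by ring
    rw [this, Real.cosh_two_mul, hB2]; ring
  have hsinhc : Real.sinh c = 2 * A * B := by
    have : c = 2 * (c / 2) := by ring
    rw [this, Real.sinh_two_mul]
  have hcoshs : Real.cosh s = 2 * S ^ 2 + 1 := by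
    have : s = 2 * (s / 2) := by ring
    rw [this, Real.cosh_two_mul, Real.cosh_sq]; ring
  rw [hcoshc, hsinhc, hcoshs] at heq
  rw [hcoshc] at hK
  have hKgt : K > 1 := by nlinarith
  have h1 : K + 1 ≠ 0 := by linarith
  have h2 : K - 1 ≠ 0 := by linarith
  rw [div_eq_div_iff h1 h2] at heq
  have hA2 : A ^ 2 = (K - 1) / 2 := by rw [hK]; ring
  have hB2' : B ^ 2 = (K + 1) / 2 := by rw [hB2, hA2]; ring
  have key : (2 * A * B) ^ 2 * (2 * S ^ 2 + 1) = K ^ 2 - 1 + 4 * (S * A) ^ 2 * (K + 1) := by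
    linear_combination (4 * B ^ 2 * (2 * S ^ 2 + 1) - 4 * S ^ 2 * (K + 1)) * hA2 +
      (2 * (K - 1) * (2 * S ^ 2 + 1)) * hB2'
  rw [← hK, key] at heq
  rw [← hrel]
  linear_combination heq
end

section
/- For all real numbers h, k, l with k > 0, if cosh k = cosh h · cosh(k/2) and cosh l = sinh²(h)·cosh(k) − cosh²(h), then 2·cosh²(k)/(cosh k + 1) = (cosh l + cosh k)/(cosh k − 1). -/
/-- For all reals `h, k, l` with `k > 0`, if `cosh k = cosh h · cosh(k/2)` and
`cosh l = sinh²h·cosh k − cosh²h`, then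
`2cosh²k/(cosh k + 1) = (cosh l + cosh k)/(cosh k − 1)`. -/
theorem eliminate_h (h k l : ℝ) (hk : k > 0)
    (h1 : Real.cosh k = Real.cosh h * Real.cosh (k / 2))
    (h2 : Real.cosh l = Real.sinh h ^ 2 * Real.cosh k - Real.cosh h ^ 2) :
    2 * Real.cosh k ^ 2 / (Real.cosh k + 1) =
      (Real.cosh l + Real.cosh k) / (Real.cosh k - 1) := by
  have hgt : 1 < Real.cosh k := Real.one_lt_cosh.mpr (ne_of_gt hk)
  have hb : Real.cosh k = 2 * Real.cosh (k / 2) ^ 2 - 1 := by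
    have h2m := Real.cosh_two_mul (k / 2)
    have hss := Real.sinh_sq (k / 2)
    rw [show 2 * (k / 2) = k by ring] at h2m
    linarith
  have hs : Real.sinh h ^ 2 = Real.cosh h ^ 2 - 1 := Real.sinh_sq h
  rw [hs] at h2
  have hsq : Real.cosh k ^ 2 = Real.cosh h ^ 2 * Real.cosh (k / 2) ^ 2 := by
    rw [h1]; ring
  have key : Real.cosh h ^ 2 * (Real.cosh k + 1) = 2 * Real.cosh k ^ 2 := by
    linear_combination Real.cosh h ^ 2 * hb - 2 * hsq
  have hne1 : Real.cosh k + 1 ≠ 0 := by linarith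
  have hne2 : Real.cosh k - 1 ≠ 0 := by linarith
  rw [h2, div_eq_div_iff (by linarith) (by linarith : Real.cosh k - 1 ≠ 0)]
  linear_combination (1 - Real.cosh k) * key
end

section
/- For all real numbers c > 0 and s > 0, both functions t ↦ cosh(s/2)·cosh((c − t)/2) and t ↦ cosh(s)·cosh(t/2)·cosh(c − t/2) − sinh(t/2)·sinh(c − t/2) are strictly decreasing on the interval [0, c]. -/
/-- For all reals `c > 0` and `s > 0`, both `t ↦ cosh(s/2)·cosh((c − t)/2)` and
`t ↦ cosh s·cosh(t/2)·cosh(c − t/2) − sinh(t/2)·sinh(c − t/2)` are strictly decreasing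
on `[0, c]`. -/
theorem lDE_lC_decreasing (c s : ℝ) (hc : c > 0) (hs : s > 0) :
    StrictAntiOn (fun t => Real.cosh (s / 2) * Real.cosh ((c - t) / 2)) (Set.Icc 0 c) ∧
    StrictAntiOn
      (fun t => Real.cosh s * Real.cosh (t / 2) * Real.cosh (c - t / 2) -
        Real.sinh (t / 2) * Real.sinh (c - t / 2)) (Set.Icc 0 c) := by
  have key : ∀ t : ℝ, Real.cosh s * Real.cosh (t / 2) * Real.cosh (c - t / 2) -
      Real.sinh (t / 2) * Real.sinh (c - t / 2)
      = (Real.cosh s - 1) / 2 * Real.cosh c + (Real.cosh s + 1) / 2 * Real.cosh (c - t) := by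
    intro t
    have h1 : Real.cosh c = Real.cosh (t / 2) * Real.cosh (c - t / 2) +
        Real.sinh (t / 2) * Real.sinh (c - t / 2) := by
      have := Real.cosh_add (t / 2) (c - t / 2)
      rw [show t / 2 + (c - t / 2) = c by ring] at this
      linarith
    have h2 : Real.cosh (c - t) = Real.cosh (t / 2) * Real.cosh (c - t / 2) -
        Real.sinh (t / 2) * Real.sinh (c - t / 2) := by
      have := Real.cosh_sub (t / 2) (c - t / 2)
      rw [show t / 2 - (c - t / 2) = -(c - t) by ring, Real.cosh_neg] at this
      linarith
    linear_combination (-(Real.cosh s - 1) / 2) * h1 + (-(Real.cosh s + 1) / 2) * h2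
  have hcosh : ∀ x ∈ Set.Icc (0:ℝ) c, ∀ y ∈ Set.Icc (0:ℝ) c, x < y →
      Real.cosh (c - y) < Real.cosh (c - x) := by
    intro x hx y hy hxy
    rw [Real.cosh_lt_cosh, abs_of_nonneg (by linarith [hy.2]),
      abs_of_nonneg (by linarith [hx.2])]
    linarith
  constructor
  · intro x hx y hy hxy
    have h := hcosh x hx y hy hxy
    have h2 : Real.cosh ((c - y) / 2) < Real.cosh ((c - x) / 2) := by
      rw [Real.cosh_lt_cosh, abs_of_nonneg (by linarith [hy.2]),
        abs_of_nonneg (by linarith [hx.2])]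
      linarith
    have hp : 0 < Real.cosh (s / 2) := Real.cosh_pos _
    exact mul_lt_mul_of_pos_left h2 hp
  · intro x hx y hy hxy
    simp only [key]
    have h := hcosh x hx y hy hxy
    nlinarith [Real.cosh_pos s]
end

section
/- For all real numbers s > 0 and c > 0, there exists a unique t₀ in the open interval (0, c) such that 2·arccosh(cosh(t₀/2)·cosh(s/2)) = arccosh(cosh(s)·cosh(t₀/2)·cosh(c − t₀/2) − sinh(t₀/2)·sinh(c − t₀/2)). -/
noncomputable def arccosh (x : ℝ) : ℝ := Real.log (x + Real.sqrt (x ^ 2 - 1))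

lemma arccosh_cosh {x : ℝ} (hx : 0 ≤ x) : arccosh (Real.cosh x) = x := by
  unfold arccosh
  rw [show Real.cosh x ^ 2 - 1 = Real.sinh x ^ 2 by rw [Real.sinh_sq],
    Real.sqrt_sq (Real.sinh_nonneg_iff.mpr hx), Real.cosh_add_sinh, Real.log_exp]

lemma arccosh_strictMonoOn : StrictMonoOn arccosh (Set.Ici 1) := by
  intro x hx y hy hxy
  simp only [Set.mem_Ici] at hx hy
  unfold arccosh
  have h1 : Real.sqrt (x ^ 2 - 1) ≤ Real.sqrt (y ^ 2 - 1) := by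
    apply Real.sqrt_le_sqrt; nlinarith
  have h2 : (0:ℝ) < x + Real.sqrt (x ^ 2 - 1) := by
    have := Real.sqrt_nonneg (x ^ 2 - 1); linarith
  exact Real.log_lt_log h2 (by linarith)

lemma cosh_arccosh {y : ℝ} (hy : 1 ≤ y) : Real.cosh (arccosh y) = y := by
  unfold arccosh
  have hnn : (0:ℝ) ≤ y ^ 2 - 1 := by nlinarith
  have hsq := Real.sq_sqrt hnn
  have hz : (0:ℝ) < y + Real.sqrt (y ^ 2 - 1) := by
    have := Real.sqrt_nonneg (y ^ 2 - 1); linarith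
  rw [Real.cosh_eq, Real.exp_log hz, Real.exp_neg, Real.exp_log hz]
  field_simp
  nlinarith [hsq]

lemma arccosh_nonneg {y : ℝ} (hy : 1 ≤ y) : 0 ≤ arccosh y := by
  unfold arccosh
  apply Real.log_nonneg
  have := Real.sqrt_nonneg (y ^ 2 - 1); linarith

lemma two_arccosh {y : ℝ} (hy : 1 ≤ y) :
    2 * arccosh y = arccosh (2 * y ^ 2 - 1) := by
  have h1 : Real.cosh (2 * arccosh y) = 2 * y ^ 2 - 1 := by
    rw [Real.cosh_two_mul, cosh_arccosh hy]
    have := Real.cosh_sq_sub_sinh_sq (arccosh y)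
    rw [cosh_arccosh hy] at this
    nlinarith
  have h2 : 0 ≤ 2 * arccosh y := by linarith [arccosh_nonneg hy]
  calc 2 * arccosh y = arccosh (Real.cosh (2 * arccosh y)) := (arccosh_cosh h2).symm
    _ = arccosh (2 * y ^ 2 - 1) := by rw [h1]

lemma continuousAt_arccosh {x : ℝ} (hx : 1 ≤ x) : ContinuousAt arccosh x := by
  unfold arccosh
  apply ContinuousAt.log
  · exact (continuousAt_id.add ((continuousAt_id.pow 2).sub continuousAt_const).sqrt)
  · have := Real.sqrt_nonneg (x ^ 2 - 1); intro h; linarith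

/-- For all reals `s > 0` and `c > 0`, there exists a unique `t₀ ∈ (0, c)` with
`2·arccosh(cosh(t₀/2)·cosh(s/2)) =
  arccosh(cosh s·cosh(t₀/2)·cosh(c − t₀/2) − sinh(t₀/2)·sinh(c − t₀/2))`. -/
theorem exists_unique_crossing (s c : ℝ) (hs : s > 0) (hc : c > 0) :
    ∃! t₀ : ℝ, t₀ ∈ Set.Ioo 0 c ∧
      2 * arccosh (Real.cosh (t₀ / 2) * Real.cosh (s / 2)) =
        arccosh (Real.cosh s * Real.cosh (t₀ / 2) * Real.cosh (c - t₀ / 2) -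
          Real.sinh (t₀ / 2) * Real.sinh (c - t₀ / 2)) := by
  set A : ℝ → ℝ := fun t => Real.cosh (t / 2) * Real.cosh (s / 2) with hA_def
  set B : ℝ → ℝ := fun t => Real.cosh s * Real.cosh (t / 2) * Real.cosh (c - t / 2) -
      Real.sinh (t / 2) * Real.sinh (c - t / 2) with hB_def
  have hcs : 1 < Real.cosh s := Real.one_lt_cosh.mpr (ne_of_gt hs)
  have hcs2 : 1 < Real.cosh (s / 2) := Real.one_lt_cosh.mpr (by positivity)
  have hcc : 1 < Real.cosh c := Real.one_lt_cosh.mpr (ne_of_gt hc)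
  -- B rewritten
  have hB_eq : ∀ t : ℝ, B t =
      (Real.cosh c * (Real.cosh s - 1) + Real.cosh (c - t) * (Real.cosh s + 1)) / 2 := by
    intro t
    have e1 : Real.cosh c = Real.cosh (t / 2) * Real.cosh (c - t / 2) +
        Real.sinh (t / 2) * Real.sinh (c - t / 2) := by
      rw [show c = t / 2 + (c - t / 2) by ring, Real.cosh_add]
      ring_nf
    have e2 : Real.cosh (c - t) = Real.cosh (c - t / 2) * Real.cosh (t / 2) -
        Real.sinh (c - t / 2) * Real.sinh (t / 2) := by
      rw [show c - t = (c - t / 2) - t / 2 by ring, Real.cosh_sub]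
    simp only [hB_def]
    linear_combination (-(Real.cosh s - 1) / 2) * e1 + (-(Real.cosh s + 1) / 2) * e2
  have hA1 : ∀ t : ℝ, 1 < A t := by
    intro t
    have h1 : 1 ≤ Real.cosh (t / 2) := Real.one_le_cosh _
    calc (1:ℝ) < Real.cosh (s / 2) := hcs2
      _ ≤ Real.cosh (t / 2) * Real.cosh (s / 2) := by nlinarith
  have hB1 : ∀ t : ℝ, 1 < B t := by
    intro t
    rw [hB_eq t]
    have h1 : 1 ≤ Real.cosh (c - t) := Real.one_le_cosh _
    nlinarith
  set f : ℝ → ℝ := fun t => 2 * arccosh (A t) - arccosh (B t) with hf_def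
  -- strict monotonicity of f on Icc 0 c
  have hmono : StrictMonoOn f (Set.Icc 0 c) := by
    intro x hx y hy hxy
    obtain ⟨hx0, hxc⟩ := hx
    obtain ⟨hy0, hyc⟩ := hy
    have hAxy : A x < A y := by
      have : Real.cosh (x / 2) < Real.cosh (y / 2) := by
        rw [Real.cosh_lt_cosh, abs_of_nonneg (by linarith), abs_of_nonneg (by linarith)]
        linarith
      have hpos : 0 < Real.cosh (s / 2) := by linarith
      simp only [hA_def]
      nlinarith
    have hBxy : B y < B x := by
      rw [hB_eq x, hB_eq y]
      have : Real.cosh (c - y) < Real.cosh (c - x) := by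
        rw [Real.cosh_lt_cosh, abs_of_nonneg (by linarith), abs_of_nonneg (by linarith)]
        linarith
      nlinarith
    have h1 := arccosh_strictMonoOn (Set.mem_Ici.mpr (le_of_lt (hA1 x)))
      (Set.mem_Ici.mpr (le_of_lt (hA1 y))) hAxy
    have h2 := arccosh_strictMonoOn (Set.mem_Ici.mpr (le_of_lt (hB1 y)))
      (Set.mem_Ici.mpr (le_of_lt (hB1 x))) hBxy
    simp only [hf_def]
    linarith
  -- continuity of f
  have hfcont : Continuous f := by
    have hAc : Continuous A := by
      simp only [hA_def]
      exact (Real.continuous_cosh.comp (continuous_id.div_const 2)).mul continuous_const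
    have hBc : Continuous B := by
      simp only [hB_def]
      fun_prop
    have h1 : Continuous fun t => arccosh (A t) :=
      continuous_iff_continuousAt.mpr fun t =>
        (continuousAt_arccosh (le_of_lt (hA1 t))).comp hAc.continuousAt
    have h2 : Continuous fun t => arccosh (B t) :=
      continuous_iff_continuousAt.mpr fun t =>
        (continuousAt_arccosh (le_of_lt (hB1 t))).comp hBc.continuousAt
    exact (continuous_const.mul h1).sub h2
  -- f 0 < 0
  have hf0 : f 0 < 0 := by
    have hA0 : A 0 = Real.cosh (s / 2) := by
      simp [hA_def, Real.cosh_zero]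
    have hB0 : B 0 = Real.cosh s * Real.cosh c := by
      rw [hB_eq 0]
      have e : Real.cosh (c - 0) = Real.cosh c := by norm_num
      rw [e]; ring
    have h1 : 2 * arccosh (A 0) = s := by
      rw [hA0, arccosh_cosh (by positivity)]; ring
    have h2 : s < arccosh (B 0) := by
      have hlt : Real.cosh s < Real.cosh s * Real.cosh c := by nlinarith
      have := arccosh_strictMonoOn (Set.mem_Ici.mpr (le_of_lt hcs))
        (Set.mem_Ici.mpr (by nlinarith : (1:ℝ) ≤ Real.cosh s * Real.cosh c)) hlt
      rw [arccosh_cosh (le_of_lt hs)] at this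
      rw [hB0]; exact this
    simp only [hf_def]
    linarith
  -- f c > 0
  have hfc : 0 < f c := by
    have hAc1 : 1 ≤ A c := le_of_lt (hA1 c)
    have key : B c < 2 * (A c) ^ 2 - 1 := by
      rw [hB_eq c]
      have e : Real.cosh (c - c) = 1 := by norm_num
      rw [e]
      have hs2 : Real.cosh s = 2 * Real.cosh (s / 2) ^ 2 - 1 := by
        have := Real.cosh_two_mul (s / 2)
        have h2 := Real.cosh_sq_sub_sinh_sq (s / 2)
        rw [show 2 * (s / 2) = s by ring] at this
        nlinarith
      have hc2 : Real.cosh c = 2 * Real.cosh (c / 2) ^ 2 - 1 := by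
        have := Real.cosh_two_mul (c / 2)
        have h2 := Real.cosh_sq_sub_sinh_sq (c / 2)
        rw [show 2 * (c / 2) = c by ring] at this
        nlinarith
      have hcc2 : 1 < Real.cosh (c / 2) := Real.one_lt_cosh.mpr (by positivity)
      simp only [hA_def]
      nlinarith
    have h1 : 2 * arccosh (A c) = arccosh (2 * (A c) ^ 2 - 1) := two_arccosh hAc1
    have h2 : arccosh (B c) < arccosh (2 * (A c) ^ 2 - 1) :=
      arccosh_strictMonoOn (Set.mem_Ici.mpr (le_of_lt (hB1 c)))
        (Set.mem_Ici.mpr (by nlinarith : (1:ℝ) ≤ 2 * (A c) ^ 2 - 1)) key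
    simp only [hf_def]
    linarith
  -- existence via IVT
  have hIVT : ∃ t₀ ∈ Set.Ioo 0 c, f t₀ = 0 := by
    have := intermediate_value_Ioo (le_of_lt hc) hfcont.continuousOn
      (Set.mem_Ioo.mpr ⟨hf0, hfc⟩)
    obtain ⟨t₀, ht₀, hft₀⟩ := this
    exact ⟨t₀, ht₀, hft₀⟩
  obtain ⟨t₀, ht₀, hft₀⟩ := hIVT
  refine ⟨t₀, ⟨ht₀, by simp only [hf_def] at hft₀; linarith⟩, ?_⟩
  rintro t₁ ⟨ht₁, heq⟩
  have hft₁ : f t₁ = 0 := by simp only [hf_def]; linarith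
  exact hmono.injOn (Set.mem_Icc.mpr ⟨le_of_lt ht₁.1, le_of_lt ht₁.2⟩)
    (Set.mem_Icc.mpr ⟨le_of_lt ht₀.1, le_of_lt ht₀.2⟩) (by rw [hft₀, hft₁])
end
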